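/- No finite simple group is (∗)-coverable. That is, if G is a finite simple group, then there do not exist proper subgroups H, K of G with G = K ∪ ⋃_{g∈G} H^g. -/

import Mathlib

/-!
By Burnside's lemma a finite group acting transitively on at least two points has on average
one fixed point per element, while the identity fixes them all; so some element is a derangement.
Applied to `G ⧸ H` this is Jordan's theorem: some `x` has no conjugate in a proper subgroup `H`.
In a cover `G = K ∪ ⋃ H^g` the whole conjugacy class of this `x ≠ 1` then lies in `K`, so `K`
contains its normal closure, which is all of `G` when `G` is simple.
-/

open MulAction in
theorem MulAction.exists_fixedBy_eq_empty {G X : Type*} [Group G] [Finite G] [MulAction G X]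
    [Finite X] [Nontrivial X] [IsPretransitive G X] : ∃ g : G, fixedBy X g = ∅ := by
  classical
  have := Fintype.ofFinite G
  have := Fintype.ofFinite X
  obtain ⟨_⟩ := (pretransitive_iff_unique_quotient_of_nonempty G X).1 ‹_›
  have burnside := sum_card_fixedBy_eq_card_orbits_mul_card_group G X
  rw [Fintype.card_unique, one_mul] at burnside
  by_contra! hfix
  have hpos (g : G) : 1 ≤ Fintype.card (fixedBy X g) :=
    Fintype.card_pos_iff.2 (hfix g).to_subtype
  have hone : 1 < Fintype.card (fixedBy X (1 : G)) := by
    simpa [fixedBy_one_eq_univ] using Fintype.one_lt_card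
  have hcard_lt : Fintype.card G < ∑ g : G, Fintype.card (fixedBy X g) :=
    calc Fintype.card G = ∑ _g : G, 1 := by simp
      _ < _ := Finset.sum_lt_sum (fun g _ ↦ hpos g) ⟨1, Finset.mem_univ _, hone⟩
  omega

theorem Subgroup.exists_forall_conj_notMem {G : Type*} [Group G] [Finite G] {H : Subgroup G}
    (hH : H ≠ ⊤) : ∃ x : G, ∀ g : G, g * x * g⁻¹ ∉ H := by
  have : Nontrivial (G ⧸ H) := QuotientGroup.nontrivial_iff.2 hH
  obtain ⟨x, hx⟩ := MulAction.exists_fixedBy_eq_empty (G := G) (X := G ⧸ H)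
  refine ⟨x⁻¹, fun g hg ↦ ?_⟩
  have : ((g⁻¹ : G) : G ⧸ H) ∈ MulAction.fixedBy (G ⧸ H) x := by
    rw [MulAction.mem_fixedBy, MulAction.Quotient.smul_mk, QuotientGroup.eq]
    simpa [mul_assoc] using hg
  simp [hx] at this

theorem IsSimpleGroup.eq_top_of_forall_conj_mem {G : Type*} [Group G] [IsSimpleGroup G]
    {K : Subgroup G} {x : G} (hx : x ≠ 1) (hK : ∀ g : G, g * x * g⁻¹ ∈ K) : K = ⊤ := by
  have hclosure : Subgroup.normalClosure {x} = ⊤ :=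
    (Subgroup.normalClosure_normal.eq_bot_or_eq_top).resolve_left
      (by simpa [Subgroup.normalClosure_eq_bot_iff] using hx)
  refine top_le_iff.1 (hclosure ▸ (Subgroup.closure_le K).2 ?_)
  intro y hy
  obtain ⟨_, rfl, hxy⟩ := Group.mem_conjugatesOfSet_iff.1 hy
  obtain ⟨g, rfl⟩ := isConj_iff.1 hxy
  exact hK g

/-- No finite simple group is (∗)-coverable: there are no proper subgroups `H`, `K`
with `G = K ∪ ⋃_{g∈G} H^g`. -/
theorem stmt_3 {G : Type*} [Group G] [Finite G] [IsSimpleGroup G] :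
    ¬ ∃ H K : Subgroup G, H ≠ ⊤ ∧ K ≠ ⊤ ∧
      ∀ x : G, x ∈ K ∨ ∃ g : G, g * x * g⁻¹ ∈ H := by
  rintro ⟨H, K, hH, hK, hcover⟩
  obtain ⟨x, hx⟩ := Subgroup.exists_forall_conj_notMem hH
  have hx1 : x ≠ 1 := by
    rintro rfl
    exact hx 1 (by simp [H.one_mem])
  refine hK (IsSimpleGroup.eq_top_of_forall_conj_mem hx1 fun g ↦ ?_)
  refine (hcover _).resolve_right ?_
  rintro ⟨c, hc⟩
  exact hx (c * g) (by simpa [mul_assoc] using hc)
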